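/- arXiv:2210.08693 — 2 statements merged into one kernel-verified Lean document; each statement's English description precedes it below -/
import Mathlib

section
/- Let n = 2^t·m with m an odd positive integer and t ≥ 1, let q be a positive integer, and set q' = q/2^{ϑ₂(q)} (an odd integer). If 2^{t−1} ∣ q then c_n(q) = (−1)^{q/2^{t−1}}·2^{t−1}·c_m(q'), and if 2^{t−1} ∤ q then c_n(q) = 0. -/
open scoped BigOperators
open Finset

/-- Ramanujan's sum `c_m(q) = Σ_{1 ≤ a ≤ m, gcd(a,m)=1} e^{2πiaq/m}`. -/
noncomputable def rc (m q : ℕ) : ℂ :=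
  ∑ a ∈ (Finset.Icc 1 m).filter (fun a => Nat.gcd a m = 1),
    Complex.exp (((2 * Real.pi * a * q / m : ℝ) : ℂ) * Complex.I)

/-- Ramanujan's sine sum `s_m(q) = −Σ_{1 ≤ a ≤ m−1, gcd(a,m)=1, a ≡ 1 (4)} 2 sin(2πaq/m)`. -/
noncomputable def rs (m q : ℕ) : ℂ :=
  -∑ a ∈ (Finset.Icc 1 (m - 1)).filter (fun a => Nat.gcd a m = 1 ∧ a % 4 = 1),
    2 * Complex.sin ((2 * Real.pi * a * q / m : ℝ) : ℂ)

/-- `G_n(d) = {k : 1 ≤ k ≤ n−1, gcd(k,n) = d}`. -/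
def Gn (n d : ℕ) : Finset ℕ := (Finset.Icc 1 (n - 1)).filter (fun k => Nat.gcd k n = d)

/-- `G_n^r(d) = {k ∈ G_n(d) : k ≡ r (mod 4)}`. -/
def Gnr (n d r : ℕ) : Finset ℕ := (Gn n d).filter (fun k => k % 4 = r)

/-- Connection set of the integral mixed circulant graph `IMCG_n(B,D,σ)`. -/
def connSet (n : ℕ) (B D : Finset ℕ) (σ : ℕ → ℤ) : Finset ℕ :=
  (B.biUnion (fun d => Gn n d)) ∪ (D.biUnion (fun d => Gnr n d (if σ d = 1 then 1 else 3)))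

/-- The subset of `ℤ_n` obtained from a finite set of natural numbers. -/
def castSet (n : ℕ) (C : Finset ℕ) : Set (ZMod n) := (fun k : ℕ => (k : ZMod n)) '' ↑C

open Classical in
/-- Hermitian adjacency matrix of the mixed graph on `ℤ_n` with connection set `C`. -/
noncomputable def Hgraph (n : ℕ) (C : Set (ZMod n)) : Matrix (ZMod n) (ZMod n) ℂ :=
  Matrix.of fun a b =>
    if b - a ∈ C ∧ a - b ∈ C then 1
    else if b - a ∈ C then Complex.I
    else if a - b ∈ C then -Complex.I
    else 0


open Classical in
/-- Hermitian adjacency matrix of the mixed circulant graph `G(ℤ_n, C)` with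
arc set given explicitly by `Cbar ⊆ C`. -/
noncomputable def Hmix (n : ℕ) (C Cbar : Set (ZMod n)) : Matrix (ZMod n) (ZMod n) ℂ :=
  Matrix.of fun a b =>
    if b - a ∈ C \ Cbar then 1
    else if b - a ∈ Cbar then Complex.I
    else if a - b ∈ Cbar then -Complex.I
    else 0

open Classical in
/-- Adjacency (0-1) matrix of the circulant graph on `ℤ_n` with connection set `C`. -/
noncomputable def Hadj (n : ℕ) (C : Set (ZMod n)) : Matrix (ZMod n) (ZMod n) ℂ :=
  Matrix.of fun a b => if b - a ∈ C then 1 else 0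

/-- Perfect state transfer from `u` to `v` for the Hamiltonian `H`. -/
noncomputable def PSTmat (n : ℕ) [NeZero n] (H : Matrix (ZMod n) (ZMod n) ℂ)
    (u v : ZMod n) : Prop :=
  ∃ (t : ℝ) (γ : ℂ), ‖γ‖ = 1 ∧
    (NormedSpace.exp ((Complex.I * (t : ℂ)) • H)).mulVec (Pi.single u 1)
      = γ • (Pi.single v 1 : ZMod n → ℂ)

/-- `ω = e^{2πi/n}`. -/
noncomputable def omegaN (n : ℕ) : ℂ := Complex.exp (((2 * Real.pi / n : ℝ) : ℂ) * Complex.I)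

/-- The eigenvector `v_j = (1, ω^j, ω^{2j}, …, ω^{(n−1)j})`. -/
noncomputable def eigVec (n : ℕ) (j : ℕ) : ZMod n → ℂ := fun a => omegaN n ^ (a.val * j)

/-- Perfect state transfer from `u` to `v` on the mixed graph with connection set `C`. -/
noncomputable def PST (n : ℕ) [NeZero n] (C : Set (ZMod n)) (u v : ZMod n) : Prop :=
  PSTmat n (Hgraph n C) u v

/-- The data `(B, D, σ)` defines an integral mixed circulant graph `IMCG_n(B,D,σ)`. -/
def IsIMCG (n : ℕ) (B D : Finset ℕ) (σ : ℕ → ℤ) : Prop :=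
  (∀ d ∈ B, d ∣ n ∧ 1 ≤ d ∧ d < n) ∧
  (∀ d ∈ D, d ∣ n / 4 ∧ 1 ≤ d ∧ d ≤ n / 4) ∧
  (¬ (4 ∣ n) → D = ∅) ∧
  Disjoint B D ∧
  (∀ d ∈ D, σ d = 1 ∨ σ d = -1)

/-- The eigenvalues `γ_j = Σ_{d∈B} c_{n/d}(j) + Σ_{d∈D} σ(d)·s_{n/d}(j)`. -/
noncomputable def gammaEig (n : ℕ) (B D : Finset ℕ) (σ : ℕ → ℤ) (j : ℕ) : ℂ :=
  (∑ d ∈ B, rc (n / d) j) + ∑ d ∈ D, (σ d : ℂ) * rs (n / d) j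

/-- `B_i = {d ∈ B : ϑ₂(n/d) = i}` (also used for `D_i`). -/
def Bpart (n : ℕ) (B : Finset ℕ) (i : ℕ) : Finset ℕ :=
  B.filter (fun d => padicValNat 2 (n / d) = i)

/-- `B*_i = B_i \ {n/2^i}`. -/
def BpartStar (n : ℕ) (B : Finset ℕ) (i : ℕ) : Finset ℕ := (Bpart n B i).erase (n / 2 ^ i)

/-- `cS = {c·d : d ∈ S}`. -/
def scaleSet (c : ℕ) (S : Finset ℕ) : Finset ℕ := S.image (fun d => c * d)

/-- `Λ_1(j)`. -/
noncomputable def Lam1 (n : ℕ) (D : Finset ℕ) (σ : ℕ → ℤ) (j : ℕ) : ℂ :=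
  ∑ d ∈ Bpart n D 2, (σ d : ℂ) * (-1 : ℂ) ^ ((n / (4 * d) - 1) / 2)
    * (-1 : ℂ) ^ ((j + 1) / 2) * rc (n / (4 * d)) j

/-- `Λ_2(j)`. -/
noncomputable def Lam2 (n : ℕ) (D : Finset ℕ) (σ : ℕ → ℤ) (j : ℕ) : ℂ :=
  ∑ d ∈ Bpart n D 3, (σ d : ℂ) * (-1 : ℂ) ^ ((n / (8 * d) - 1) / 2)
    * (-1 : ℂ) ^ ((j / 2 + 1) / 2) * rc (n / (8 * d)) (j / 2)

/-- `Λ_3(j)`. -/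
noncomputable def Lam3 (n : ℕ) (B D : Finset ℕ) (σ : ℕ → ℤ) (j : ℕ) : ℂ :=
  (∑ i ∈ Finset.Icc 4 (padicValNat 2 n), ∑ d ∈ Bpart n B i,
      (if 2 ^ (i - 1) ∣ j then (-1 : ℂ) ^ (j / 2 ^ (i - 1)) else 0)
        * 2 ^ (i - 4) * rc (n / (2 ^ i * d)) (j / 2 ^ (padicValNat 2 j)))
  + ∑ i ∈ Finset.Icc 4 (padicValNat 2 n), ∑ d ∈ Bpart n D i,
      (if 2 ^ (i - 2) ∣ j ∧ Odd (j / 2 ^ (i - 2)) then 1 else 0)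
        * (σ d : ℂ) * (-1 : ℂ) ^ ((n / (2 ^ i * d) - 1) / 2)
        * (-1 : ℂ) ^ ((j / 2 ^ (i - 2) + 1) / 2) * 2 ^ (i - 4)
        * rc (n / (2 ^ i * d)) (j / 2 ^ (i - 2))

/-- `Δ(j)`. -/
noncomputable def Delta (n : ℕ) (B D : Finset ℕ) (σ : ℕ → ℤ) (j : ℕ) : ℂ :=
  (∑ d ∈ BpartStar n B 2, rc (n / (4 * d)) (j / 2 ^ (padicValNat 2 j)))
  + (∑ d ∈ Bpart n B 3, (-1 : ℂ) ^ (j / 4) * rc (n / (8 * d)) (j / 2 ^ (padicValNat 2 j)))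
  + 2 * Lam3 n B D σ j

/-! Split `1 ≤ a ≤ 2n` into `b` and `b + n` with `1 ≤ b ≤ n`; since
`e((b + n)q/2n) = (-1)^q e(bq/2n)`, for even `n` this gives `c_{2n}(q) = 0` when `q` is odd and
`c_{2n}(2q) = 2 c_n(q)`, and for odd `m` (where the even `a` contribute `c_m(q)`) it gives
`c_{2m}(q) = (-1)^q c_m(q)`. Induction on `t` then yields the formula with `c_m(q)` in place of
`c_m(q')`, and `c_m(q) = c_m(q')` because `q = 2^{ϑ₂(q)} q'` and multiplication by the unit
`2^{ϑ₂(q)}` of `ℤ/m` permutes the units of `ℤ/m`. -/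

open Complex

noncomputable def expTerm (n q a : ℕ) : ℂ := exp (((2 * Real.pi * a * q / n : ℝ) : ℂ) * I)

theorem rc_eq_sum_expTerm (n q : ℕ) :
    rc n q = ∑ a ∈ (Icc 1 n).filter (fun a => a.gcd n = 1), expTerm n q a := rfl

theorem expTerm_eq_stdAddChar (n q a : ℕ) [NeZero n] :
    expTerm n q a = ZMod.stdAddChar ((a * q : ℕ) : ZMod n) := by
  rw [← Int.cast_natCast, ZMod.stdAddChar_coe, expTerm]
  push_cast
  ring_nf

theorem rc_eq_sum_units (n q : ℕ) [NeZero n] :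
    rc n q = ∑ u : (ZMod n)ˣ, ZMod.stdAddChar ((u : ZMod n) * (q : ZMod n)) := by
  refine Finset.sum_bij' (fun a ha => ZMod.unitOfCoprime a (mem_filter.1 ha).2)
    -- the representative of `u` in `[1, n]`
    (fun u _ => ((u : ZMod n) - 1).val + 1) (fun _ _ => mem_univ _) ?_ ?_ ?_ ?_
  · intro u _
    have hcop : (((u : ZMod n) - 1).val + 1).Coprime n := by
      rw [← ZMod.isUnit_iff_coprime]; simp
    simp only [mem_filter, mem_Icc]
    exact ⟨⟨by omega, ZMod.val_lt _⟩, hcop⟩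
  · intro a ha
    obtain ⟨⟨h1, h2⟩, -⟩ := by simpa only [mem_filter, mem_Icc] using ha
    rw [ZMod.coe_unitOfCoprime, ← Nat.cast_pred h1, ZMod.val_natCast, Nat.mod_eq_of_lt (by omega)]
    omega
  · intro u _
    ext
    simp
  · intro a _
    rw [← expTerm, expTerm_eq_stdAddChar, ZMod.coe_unitOfCoprime, Nat.cast_mul]

theorem rc_mul_left_of_coprime {n c : ℕ} (q : ℕ) (hc : c.Coprime n) : rc n (c * q) = rc n q := by
  rcases eq_or_ne n 0 with rfl | hn
  · simp [rc]
  have : NeZero n := ⟨hn⟩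
  rw [rc_eq_sum_units, rc_eq_sum_units]
  refine Fintype.sum_equiv (Equiv.mulRight (ZMod.unitOfCoprime c hc)) _ _ fun u => ?_
  simp only [Equiv.coe_mulRight, Units.val_mul, ZMod.coe_unitOfCoprime, Nat.cast_mul, mul_assoc]

theorem expTerm_mul_mul (n q a : ℕ) {c : ℕ} (hc : c ≠ 0) :
    expTerm (c * n) (c * q) a = expTerm n q a := by
  rcases eq_or_ne n 0 with rfl | hn
  · simp [expTerm]
  unfold expTerm
  congr 3
  push_cast
  field_simp

theorem expTerm_mul_mul_right (n q a : ℕ) {c : ℕ} (hc : c ≠ 0) :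
    expTerm (c * n) q (c * a) = expTerm n q a := by
  rcases eq_or_ne n 0 with rfl | hn
  · simp [expTerm]
  unfold expTerm
  congr 3
  push_cast
  field_simp

theorem expTerm_add_half (n q b : ℕ) (hn : n ≠ 0) :
    expTerm (2 * n) q (b + n) = (-1) ^ q * expTerm (2 * n) q b := by
  have harg : (2 * Real.pi * ((b + n : ℕ) : ℝ) * q / ((2 * n : ℕ) : ℝ) : ℝ)
      = 2 * Real.pi * b * q / ((2 * n : ℕ) : ℝ) + q * Real.pi := by
    push_cast
    field_simp
  rw [expTerm, expTerm, harg, ofReal_add, add_mul, exp_add, mul_comm]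
  push_cast
  rw [mul_assoc, exp_nat_mul, exp_pi_mul_I]

theorem sum_Icc_two_mul_filter {M : Type*} [AddCommMonoid M] (n : ℕ) (P : ℕ → Prop)
    [DecidablePred P] (hP : ∀ b, P (b + n) ↔ P b) (F : ℕ → M) :
    ∑ a ∈ (Icc 1 (2 * n)).filter P, F a = ∑ b ∈ (Icc 1 n).filter P, (F b + F (b + n)) := by
  have hIcc : Icc 1 (2 * n) = Icc 1 n ∪ (Icc 1 n).image (· + n) := by
    ext a
    simp only [image_add_right_Icc, mem_union, mem_Icc]
    omega
  have hdisj : Disjoint (Icc 1 n) ((Icc 1 n).image (· + n)) := by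
    simp only [image_add_right_Icc, disjoint_left, mem_Icc]
    omega
  rw [sum_filter, hIcc, sum_union hdisj, sum_image (fun _ _ _ _ => Nat.add_right_cancel),
    sum_filter, ← sum_add_distrib]
  simp only [hP, ite_add_ite, add_zero]

theorem sum_coprime_Icc_two_mul_expTerm (n q : ℕ) :
    ∑ a ∈ (Icc 1 (2 * n)).filter (fun a => a.gcd n = 1), expTerm (2 * n) q a
      = (1 + (-1) ^ q) * ∑ b ∈ (Icc 1 n).filter (fun b => b.gcd n = 1), expTerm (2 * n) q b := by
  rcases eq_or_ne n 0 with rfl | hn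
  · simp
  rw [sum_Icc_two_mul_filter n _ (fun b => Nat.coprime_add_self_left), mul_sum]
  refine sum_congr rfl fun b _ => ?_
  rw [expTerm_add_half n q b hn]
  ring

theorem rc_two_mul_of_even {n : ℕ} (hn : Even n) (q : ℕ) :
    rc (2 * n) q
      = (1 + (-1) ^ q) * ∑ b ∈ (Icc 1 n).filter (fun b => b.gcd n = 1), expTerm (2 * n) q b := by
  rw [rc_eq_sum_expTerm, ← sum_coprime_Icc_two_mul_expTerm]
  congr 1
  refine filter_congr fun a _ => ?_
  change a.Coprime (2 * n) ↔ a.Coprime n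
  rw [Nat.coprime_mul_iff_right]
  exact ⟨And.right, fun h => ⟨h.coprime_dvd_right hn.two_dvd, h⟩⟩

theorem rc_two_mul_of_even_of_odd {n q : ℕ} (hn : Even n) (hq : Odd q) : rc (2 * n) q = 0 := by
  rw [rc_two_mul_of_even hn, hq.neg_one_pow, add_neg_cancel, zero_mul]

theorem rc_two_mul_two_mul_of_even {n : ℕ} (hn : Even n) (q : ℕ) :
    rc (2 * n) (2 * q) = 2 * rc n q := by
  rw [rc_two_mul_of_even hn, (even_two_mul q).neg_one_pow, one_add_one_eq_two, rc_eq_sum_expTerm]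
  simp only [expTerm_mul_mul n q _ two_ne_zero]

theorem rc_two_mul_add_rc_of_odd {m : ℕ} (hm : Odd m) (q : ℕ) :
    rc (2 * m) q + rc m q
      = ∑ a ∈ (Icc 1 (2 * m)).filter (fun a => a.gcd m = 1), expTerm (2 * m) q a := by
  rw [← sum_filter_add_sum_filter_not _ Odd, filter_filter, filter_filter]
  congr 1
  · rw [rc_eq_sum_expTerm]
    refine sum_congr (filter_congr fun a _ => ?_) fun _ _ => rfl
    change a.Coprime (2 * m) ↔ a.Coprime m ∧ Odd a
    rw [Nat.coprime_mul_iff_right, Nat.coprime_two_right, and_comm]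
  · have hevens : (Icc 1 (2 * m)).filter (fun a => a.gcd m = 1 ∧ ¬ Odd a)
        = ((Icc 1 m).filter (fun b => b.gcd m = 1)).image (2 * ·) := by
      ext a
      simp only [mem_filter, mem_Icc, mem_image, Nat.not_odd_iff_even]
      constructor
      · rintro ⟨⟨h1, h2⟩, hcop, b, rfl⟩
        exact ⟨b, ⟨⟨by omega, by omega⟩, (Nat.coprime_mul_iff_left.mp (two_mul b ▸ hcop)).2⟩,
          two_mul b⟩
      · rintro ⟨b, ⟨⟨h1, h2⟩, hcop⟩, rfl⟩
        exact ⟨⟨by omega, by omega⟩, (Nat.coprime_two_left.mpr hm).mul_left hcop,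
          even_two_mul b⟩
    rw [hevens, sum_image fun _ _ _ _ => Nat.eq_of_mul_eq_mul_left two_pos, rc_eq_sum_expTerm]
    simp only [expTerm_mul_mul_right m q _ two_ne_zero]

theorem rc_two_mul_of_odd {m : ℕ} (hm : Odd m) (q : ℕ) : rc (2 * m) q = (-1) ^ q * rc m q := by
  have h := rc_two_mul_add_rc_of_odd hm q
  rw [sum_coprime_Icc_two_mul_expTerm] at h
  rcases Nat.even_or_odd' q with ⟨k, rfl | rfl⟩
  · have hhalf : rc m (2 * k) = rc m k := rc_mul_left_of_coprime k (Nat.coprime_two_left.mpr hm)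
    simp only [expTerm_mul_mul m k _ two_ne_zero, ← rc_eq_sum_expTerm, hhalf] at h
    rw [(even_two_mul k).neg_one_pow] at h ⊢
    rw [hhalf]
    linear_combination h
  · rw [(odd_two_mul_add_one k).neg_one_pow] at h ⊢
    linear_combination h

theorem rc_two_pow_succ_mul {m : ℕ} (hm : Odd m) (s q : ℕ) :
    rc (2 ^ (s + 1) * m) q = if 2 ^ s ∣ q then (-1) ^ (q / 2 ^ s) * 2 ^ s * rc m q else 0 := by
  induction s generalizing q with
  | zero => simp [rc_two_mul_of_odd hm]
  | succ s ih =>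
    have hsplit : 2 ^ (s + 2) * m = 2 * (2 ^ (s + 1) * m) := by ring
    have heven : Even (2 ^ (s + 1) * m) := (Nat.even_pow.mpr ⟨even_two, s.succ_ne_zero⟩).mul_right m
    rw [hsplit]
    rcases Nat.even_or_odd' q with ⟨k, rfl | rfl⟩
    · rw [rc_two_mul_two_mul_of_even heven, ih]
      simp only [pow_succ' 2 s, Nat.mul_dvd_mul_iff_left two_pos, Nat.mul_div_mul_left _ _ two_pos,
        rc_mul_left_of_coprime k (Nat.coprime_two_left.mpr hm)]
      split_ifs <;> ring
    · have hodd := odd_two_mul_add_one k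
      refine (rc_two_mul_of_even_of_odd heven hodd).trans (if_neg fun h => ?_).symm
      exact Nat.not_even_iff_odd.mpr hodd
        (even_iff_two_dvd.mpr ((dvd_pow_self 2 s.succ_ne_zero).trans h))

theorem rc_div_two_pow_padicValNat {m : ℕ} (hm : Odd m) (q : ℕ) :
    rc m (q / 2 ^ padicValNat 2 q) = rc m q := by
  conv_rhs => rw [← Nat.mul_div_cancel' (pow_padicValNat_dvd (p := 2) (n := q))]
  exact (rc_mul_left_of_coprime _ ((Nat.coprime_two_left.mpr hm).pow_left _)).symm

theorem stmt3_general (t m q : ℕ) (ht : 1 ≤ t) (hm : Odd m) :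
    (2 ^ (t - 1) ∣ q →
      rc (2 ^ t * m) q
        = (-1 : ℂ) ^ (q / 2 ^ (t - 1)) * 2 ^ (t - 1) * rc m (q / 2 ^ (padicValNat 2 q))) ∧
    (¬ 2 ^ (t - 1) ∣ q → rc (2 ^ t * m) q = 0) := by
  obtain ⟨s, rfl⟩ : ∃ s, t = s + 1 := ⟨t - 1, by omega⟩
  rw [Nat.add_sub_cancel, rc_two_pow_succ_mul hm, rc_div_two_pow_padicValNat hm]
  exact ⟨fun h => if_pos h, fun h => if_neg h⟩

theorem stmt3 (t m q : ℕ) (ht : 1 ≤ t) (hm : Odd m) (hm0 : 0 < m) (hq : 0 < q) :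
    (2 ^ (t - 1) ∣ q →
      rc (2 ^ t * m) q
        = (-1 : ℂ) ^ (q / 2 ^ (t - 1)) * 2 ^ (t - 1) * rc m (q / 2 ^ (padicValNat 2 q))) ∧
    (¬ 2 ^ (t - 1) ∣ q → rc (2 ^ t * m) q = 0) :=
  stmt3_general t m q ht hm
end

section
/- Let Γ = IMCG_n(B,D,σ) be an integral mixed circulant graph. The integers Δ(j), as j ranges over the positive multiples of 4, all have the same parity if and only if B*_2 = 2B*_3. -/
open scoped BigOperators
open Finset

/-!
Ramanujan sums are integers, `c_m(q) = ∑_{d ∣ (m, q)} μ(m/d) d`, multiplicative in `m`, and for odd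
`m` the sum `c_m(q)` is odd exactly when `v_p(q) = v_p(m) - 1` for every prime `p ∣ m`.
Modulo 2, `Δ(j)` therefore depends only on the odd part `q` of `j`, through
`∑_{m ∈ M₂} c_m(q) + ∑_{m ∈ M₃} c_m(q)` with `M₂ = {n/(4d) : d ∈ B*_2}` and
`M₃ = {n/(8d) : d ∈ B*_3}`, two sets of odd numbers `> 1` (the excluded `d = n/8` only adds
`c_1 = 1`); and `M₂ = M₃` iff `B*_2 = 2B*_3`. If `M₂ = M₃` the two sums coincide. Otherwise, for
the least `m₀` of the symmetric difference, an odd `q` with `v_p(q) = v_p(m₀) - 1` at the primes of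
`m₀` and large valuations elsewhere makes exactly one term odd, while at `q'` = the product of the
symmetric difference every term is even.
-/

open ArithmeticFunction
open scoped ArithmeticFunction.Moebius symmDiff

def ramanujanSum (m q : ℕ) : ℤ :=
  ∑ d ∈ m.divisors with d ∣ q, μ (m / d) * d

theorem sum_moebius_divisors (n : ℕ) : ∑ d ∈ n.divisors, μ d = if n = 1 then 1 else 0 := by
  rw [← coe_mul_zeta_apply, moebius_mul_coe_zeta, one_apply]

theorem sum_Icc_exp_eq (M q : ℕ) (hM : M ≠ 0) :
    ∑ a ∈ Icc 1 M, Complex.exp (((2 * Real.pi * a * q / M : ℝ) : ℂ) * Complex.I)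
      = if M ∣ q then (M : ℂ) else 0 := by
  obtain ⟨ζ, hζ, hterm⟩ : ∃ ζ : ℂ, IsPrimitiveRoot ζ M ∧ ∀ a : ℕ,
      Complex.exp (((2 * Real.pi * a * q / M : ℝ) : ℂ) * Complex.I) = (ζ ^ q) ^ a := by
    refine ⟨_, Complex.isPrimitiveRoot_exp M hM, fun a => ?_⟩
    rw [← pow_mul, ← Complex.exp_nat_mul]
    congr 1
    push_cast
    ring
  simp_rw [hterm]
  split_ifs with h
  · simp [(hζ.pow_eq_one_iff_dvd q).2 h]
  · have hroot : (ζ ^ q) ^ M = 1 := by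
      rw [← pow_mul, mul_comm, pow_mul, hζ.pow_eq_one, one_pow]
    rw [← Ico_add_one_right_eq_Icc, geom_sum_Ico (mt (hζ.pow_eq_one_iff_dvd q).1 h) (by omega),
      pow_succ, hroot, one_mul, pow_one, sub_self, zero_div]

theorem filter_dvd_Icc_eq_image {m d : ℕ} (hd : d ∣ m) (hd0 : d ≠ 0) :
    {a ∈ Icc 1 m | d ∣ a} = (Icc 1 (m / d)).image (d * ·) := by
  obtain ⟨k, rfl⟩ := hd
  ext a
  simp only [mem_filter, mem_Icc, mem_image, Nat.mul_div_cancel_left k (Nat.pos_of_ne_zero hd0)]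
  constructor
  · rintro ⟨⟨h1, h2⟩, b, rfl⟩
    refine ⟨b, ⟨?_, ?_⟩, rfl⟩
    · rcases Nat.eq_zero_or_pos b with rfl | hb
      · simp at h1
      · exact hb
    · exact Nat.le_of_mul_le_mul_left h2 (Nat.pos_of_ne_zero hd0)
  · rintro ⟨b, ⟨h1, h2⟩, rfl⟩
    exact ⟨⟨Nat.one_le_iff_ne_zero.2 (Nat.mul_ne_zero hd0 (by omega)), Nat.mul_le_mul_left d h2⟩,
      dvd_mul_right d b⟩

theorem sum_Icc_filter_dvd_exp_eq {m d : ℕ} (q : ℕ) (hm : m ≠ 0) (hdm : d ∣ m) :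
    ∑ a ∈ Icc 1 m with d ∣ a, Complex.exp (((2 * Real.pi * a * q / m : ℝ) : ℂ) * Complex.I)
      = if m / d ∣ q then ((m / d : ℕ) : ℂ) else 0 := by
  have hd0 : d ≠ 0 := ne_zero_of_dvd_ne_zero hm hdm
  rw [filter_dvd_Icc_eq_image hdm hd0,
    sum_image fun x _ y _ h => Nat.eq_of_mul_eq_mul_left (Nat.pos_of_ne_zero hd0) h,
    ← sum_Icc_exp_eq _ _ ((Nat.div_ne_zero_iff_of_dvd hdm).2 ⟨hm, hd0⟩)]
  refine sum_congr rfl fun b _ => ?_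
  have hmd : (m : ℝ) = d * (m / d : ℕ) := by exact_mod_cast (Nat.mul_div_cancel' hdm).symm
  rw [hmd]
  congr 3
  push_cast
  field_simp

theorem rc_eq_ramanujanSum (m q : ℕ) : rc m q = ramanujanSum m q := by
  rcases eq_or_ne m 0 with rfl | hm
  · simp [rc, ramanujanSum]
  set E : ℕ → ℂ := fun a => Complex.exp (((2 * Real.pi * a * q / m : ℝ) : ℂ) * Complex.I)
  calc rc m q = ∑ a ∈ Icc 1 m, ∑ d ∈ (a.gcd m).divisors, (μ d : ℂ) * E a := by
        rw [rc, sum_filter]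
        refine sum_congr rfl fun a _ => ?_
        rw [← sum_mul, ← Int.cast_sum, sum_moebius_divisors]
        split_ifs <;> simp [E]
    _ = ∑ d ∈ m.divisors, (μ d : ℂ) * ∑ a ∈ Icc 1 m with d ∣ a, E a := by
        simp_rw [mul_sum]
        refine sum_comm' fun a d => ?_
        simp only [Nat.mem_divisors, Nat.dvd_gcd_iff, mem_filter, ne_eq, hm, not_false_eq_true,
          Nat.gcd_eq_zero_iff, and_true]
        tauto
    _ = ∑ d ∈ m.divisors, (μ d : ℂ) * if m / d ∣ q then ((m / d : ℕ) : ℂ) else 0 :=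
        sum_congr rfl fun d hd => by
          rw [sum_Icc_filter_dvd_exp_eq q hm (Nat.dvd_of_mem_divisors hd)]
    _ = ramanujanSum m q := by
        rw [← Nat.sum_div_divisors, ramanujanSum, sum_filter]
        push_cast
        refine sum_congr rfl fun d hd => ?_
        rw [Nat.div_div_self (Nat.dvd_of_mem_divisors hd) hm]
        split_ifs <;> simp [mul_comm]

def idOnDivisors (q : ℕ) : ArithmeticFunction ℤ :=
  ⟨fun d => if d ∣ q then d else 0, by simp⟩

theorem isMultiplicative_idOnDivisors (q : ℕ) : (idOnDivisors q).IsMultiplicative := by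
  refine ⟨by simp [idOnDivisors], fun {a b} hab => ?_⟩
  simp only [idOnDivisors, coe_mk]
  by_cases hdvd : a * b ∣ q
  · simp [hdvd, dvd_of_mul_right_dvd hdvd, dvd_of_mul_left_dvd hdvd]
  · by_cases ha : a ∣ q
    · have hb : ¬b ∣ q := fun hb => hdvd (hab.mul_dvd_of_dvd_of_dvd ha hb)
      simp [hdvd, ha, hb]
    · simp [hdvd, ha]

theorem ramanujanSum_eq_mul_apply (m q : ℕ) : ramanujanSum m q = (idOnDivisors q * μ) m := by
  rw [mul_apply, Nat.sum_divisorsAntidiagonal (f := fun a b => idOnDivisors q a * μ b),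
    ramanujanSum, sum_filter]
  refine sum_congr rfl fun d _ => ?_
  simp only [idOnDivisors, coe_mk]
  split_ifs <;> ring

theorem ramanujanSum_eq_prod_primeFactors {m : ℕ} (hm : m ≠ 0) (q : ℕ) :
    ramanujanSum m q = ∏ p ∈ m.primeFactors, ramanujanSum (p ^ m.factorization p) q := by
  simp only [ramanujanSum_eq_mul_apply]
  rw [((isMultiplicative_idOnDivisors q).mul isMultiplicative_moebius).multiplicative_factorization
    _ hm, Nat.prod_factorization_eq_prod_primeFactors]

theorem ramanujanSum_prime_pow_succ {p : ℕ} (hp : p.Prime) (k q : ℕ) :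
    ramanujanSum (p ^ (k + 1)) q =
      (if p ^ (k + 1) ∣ q then (p : ℤ) ^ (k + 1) else 0) -
        if p ^ k ∣ q then (p : ℤ) ^ k else 0 := by
  have hμ : ∀ i ≤ k + 1, μ (p ^ (k + 1) / p ^ i) = μ (p ^ (k + 1 - i)) := fun i hi => by
    rw [Nat.pow_div hi hp.pos]
  rw [ramanujanSum, sum_filter, Nat.sum_divisors_prime_pow hp, sum_range_succ, sum_range_succ,
    sum_eq_zero fun i hi => ?_]
  · rw [hμ _ le_rfl, hμ _ (Nat.le_succ k), Nat.sub_self, Nat.add_sub_cancel_left, pow_zero,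
      pow_one, moebius_apply_one, moebius_apply_prime hp]
    push_cast
    split_ifs <;> ring
  · have hi : i < k := mem_range.1 hi
    rw [hμ i (by omega), moebius_apply_prime_pow hp (by omega),
      if_neg (show k + 1 - i ≠ 1 by omega)]
    simp

theorem odd_prod_iff {ι : Type*} {s : Finset ι} {f : ι → ℤ} :
    Odd (∏ p ∈ s, f p) ↔ ∀ p ∈ s, Odd (f p) := by
  simp only [← Int.not_even_iff_odd, even_iff_two_dvd, Int.prime_two.dvd_finsetProd_iff,
    not_exists, not_and]

theorem odd_ramanujanSum_prime_pow_iff {p e q : ℕ} (hp : p.Prime) (hp2 : p ≠ 2) (he : e ≠ 0)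
    (hq : q ≠ 0) : Odd (ramanujanSum (p ^ e) q) ↔ q.factorization p + 1 = e := by
  obtain ⟨k, rfl⟩ := Nat.exists_eq_add_one_of_ne_zero he
  have hodd : ∀ i, Odd ((p : ℤ) ^ i) := fun i => (Int.odd_coe_nat p |>.2 (hp.odd_of_ne_two hp2)).pow
  simp only [ramanujanSum_prime_pow_succ hp, hp.pow_dvd_iff_le_factorization hq]
  split_ifs with h1 h2 h2
  · simp only [Int.not_odd_iff_even.2 ((hodd _).sub_odd (hodd _)), false_iff]
    omega
  · omega
  · simp only [zero_sub, odd_neg, hodd, true_iff]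
    omega
  · simp only [sub_self, Int.not_odd_zero, false_iff]
    omega

theorem factorization_ne_zero_of_mem_primeFactors {m p : ℕ} (hp : p ∈ m.primeFactors) :
    m.factorization p ≠ 0 :=
  Finsupp.mem_support_iff.1 (m.support_factorization ▸ hp)

theorem odd_ramanujanSum_iff {m q : ℕ} (hm : Odd m) (hq : q ≠ 0) :
    Odd (ramanujanSum m q) ↔ ∀ p ∈ m.primeFactors, q.factorization p + 1 = m.factorization p := by
  rw [ramanujanSum_eq_prod_primeFactors (Nat.ne_of_gt hm.pos), odd_prod_iff]
  refine forall₂_congr fun p hp => odd_ramanujanSum_prime_pow_iff (Nat.prime_of_mem_primeFactors hp)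
    ?_ (factorization_ne_zero_of_mem_primeFactors hp) hq
  rintro rfl
  exact Nat.not_even_iff_odd.2 hm (even_iff_two_dvd.2 (Nat.dvd_of_mem_primeFactors hp))

theorem factorization_prod_pow_of_prime {s : Finset ℕ} (hs : ∀ p ∈ s, p.Prime) (e : ℕ → ℕ)
    (r : ℕ) : (∏ p ∈ s, p ^ e p).factorization r = if r ∈ s then e r else 0 := by
  rw [Nat.factorization_prod fun p hp => pow_ne_zero _ (hs p hp).ne_zero, Finsupp.finsetSum_apply,
    sum_congr rfl fun p hp => by rw [(hs p hp).factorization_pow, Finsupp.single_apply],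
    sum_ite_eq']

theorem even_ramanujanSum_of_dvd {m q : ℕ} (hm : Odd m) (hm1 : m ≠ 1) (hq : q ≠ 0) (hmq : m ∣ q) :
    Even (ramanujanSum m q) := by
  rw [← Int.not_odd_iff_even, odd_ramanujanSum_iff hm hq]
  intro h
  have hp : m.minFac ∈ m.primeFactors :=
    Nat.mem_primeFactors.2 ⟨Nat.minFac_prime hm1, Nat.minFac_dvd m, Nat.ne_of_gt hm.pos⟩
  have hle := (Nat.factorization_le_iff_dvd (Nat.ne_of_gt hm.pos) hq).2 hmq m.minFac
  have := h _ hp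
  omega

theorem exists_odd_factorization {m₀ N : ℕ} (hN : Odd N) (hdvd : m₀ ∣ N) :
    ∃ q : ℕ, Odd q ∧ (∀ p ∈ m₀.primeFactors, q.factorization p + 1 = m₀.factorization p) ∧
      ∀ p ∈ N.primeFactors, p ∉ m₀.primeFactors → q.factorization p = N.factorization p := by
  obtain ⟨e, he⟩ : ∃ e : ℕ → ℕ, ∀ p,
      e p = if p ∈ m₀.primeFactors then m₀.factorization p - 1 else N.factorization p :=
    ⟨_, fun _ => rfl⟩
  have hq : ∀ p ∈ N.primeFactors, (∏ p ∈ N.primeFactors, p ^ e p).factorization p = e p :=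
    fun p hp => by
      rw [factorization_prod_pow_of_prime (fun p => Nat.prime_of_mem_primeFactors) e p, if_pos hp]
  refine ⟨∏ p ∈ N.primeFactors, p ^ e p,
    prod_induction _ Odd (fun _ _ => Odd.mul) odd_one fun p hp =>
      (Odd.of_dvd_nat hN (Nat.dvd_of_mem_primeFactors hp)).pow,
    fun p hp => ?_, fun p hp hp₀ => ?_⟩
  · rw [hq p (Nat.primeFactors_mono hdvd (Nat.ne_of_gt hN.pos) hp), he, if_pos hp]
    have := factorization_ne_zero_of_mem_primeFactors hp
    omega
  · rw [hq p hp, he, if_neg hp₀]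

theorem exists_odd_sum_ramanujanSum {S : Finset ℕ} (hS : S.Nonempty) (hodd : ∀ m ∈ S, Odd m) :
    ∃ q, Odd q ∧ Odd (∑ m ∈ S, ramanujanSum m q) := by
  set m₀ := S.min' hS
  have hm₀ : m₀ ∈ S := S.min'_mem hS
  have hN : Odd (∏ m ∈ S, m) := prod_induction _ Odd (fun _ _ => Odd.mul) odd_one hodd
  -- Only `m₀` contributes an odd term: any other `m ∈ S` doing so would divide `m₀`.
  obtain ⟨q, hq, hqm₀, hqN⟩ := exists_odd_factorization hN (dvd_prod_of_mem _ hm₀)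
  refine ⟨q, hq, ?_⟩
  rw [← add_sum_erase S _ hm₀]
  refine ((odd_ramanujanSum_iff (hodd m₀ hm₀) (Nat.ne_of_gt hq.pos)).2 hqm₀).add_even
    (even_sum _ fun m hm => ?_)
  obtain ⟨hne, hmS⟩ := mem_erase.1 hm
  have hm0 : m ≠ 0 := Nat.ne_of_gt (hodd m hmS).pos
  rw [← Int.not_odd_iff_even, odd_ramanujanSum_iff (hodd m hmS) (Nat.ne_of_gt hq.pos)]
  intro hqm
  refine hne (le_antisymm (Nat.le_of_dvd (hodd m₀ hm₀).pos ?_) (S.min'_le m hmS))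
  rw [← Nat.factorization_le_iff_dvd hm0 (Nat.ne_of_gt (hodd m₀ hm₀).pos)]
  intro p
  by_cases hp : p ∈ m.primeFactors
  · by_cases hp₀ : p ∈ m₀.primeFactors
    · rw [← hqm p hp, ← hqm₀ p hp₀]
    · have hpN := Nat.primeFactors_mono (dvd_prod_of_mem _ hmS) (Nat.ne_of_gt hN.pos) hp
      have hle := (Nat.factorization_le_iff_dvd hm0 (Nat.ne_of_gt hN.pos)).2
        (dvd_prod_of_mem _ hmS) p
      have := hqm p hp
      rw [hqN p hpN hp₀] at this
      omega
  · rw [← Nat.support_factorization, Finsupp.notMem_support_iff] at hp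
    rw [hp]
    exact Nat.zero_le _

theorem sum_add_sum_eq_sum_symmDiff_add {α R : Type*} [DecidableEq α] [CommSemiring R]
    {s t : Finset α} (f : α → R) :
    ∑ x ∈ s, f x + ∑ x ∈ t, f x = ∑ x ∈ s ∆ t, f x + 2 * ∑ x ∈ s ∩ t, f x := by
  have hunion : s ∪ t = s ∆ t ∪ s ∩ t := (symmDiff_sup_inf s t).symm
  have hdisj : Disjoint (s ∆ t) (s ∩ t) := disjoint_symmDiff_inf s t
  rw [← sum_union_inter, hunion, sum_union hdisj]
  ring

theorem forall_even_sub_sum_ramanujanSum_iff {s t : Finset ℕ} (hodd : ∀ m ∈ s ∪ t, Odd m)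
    (hone : ∀ m ∈ s ∪ t, m ≠ 1) :
    (∀ q q', Odd q → Odd q' → Even ((∑ m ∈ s, ramanujanSum m q + ∑ m ∈ t, ramanujanSum m q) -
      (∑ m ∈ s, ramanujanSum m q' + ∑ m ∈ t, ramanujanSum m q'))) ↔ s = t := by
  refine ⟨fun h => ?_, by
    rintro rfl q q' - -
    exact ⟨∑ m ∈ s, ramanujanSum m q - ∑ m ∈ s, ramanujanSum m q', by ring⟩⟩
  by_contra hst
  have hsub : s ∆ t ⊆ s ∪ t := symmDiff_le_sup
  obtain ⟨q, hq, hsum⟩ := exists_odd_sum_ramanujanSum (symmDiff_nonempty.2 hst)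
    fun m hm => hodd m (hsub hm)
  have hNodd : Odd (∏ m ∈ s ∆ t, m) :=
    prod_induction _ Odd (fun _ _ => Odd.mul) odd_one fun m hm => hodd m (hsub hm)
  have hsum' : Even (∑ m ∈ s ∆ t, ramanujanSum m (∏ m ∈ s ∆ t, m)) :=
    even_sum _ fun m hm => even_ramanujanSum_of_dvd (hodd m (hsub hm)) (hone m (hsub hm))
      (Nat.ne_of_gt hNodd.pos) (dvd_prod_of_mem _ hm)
  have := h q _ hq hNodd
  rw [sum_add_sum_eq_sum_symmDiff_add, sum_add_sum_eq_sum_symmDiff_add] at this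
  simp only [Int.even_sub, Int.even_add, even_two_mul, iff_true] at this
  exact Int.not_even_iff_odd.2 hsum (this.2 hsum')

theorem lam3_mem_range (n : ℕ) (B D : Finset ℕ) (σ : ℕ → ℤ) (j : ℕ) :
    Lam3 n B D σ j ∈ (Int.castRingHom ℂ).range := by
  have h2 : (2 : ℂ) ∈ (Int.castRingHom ℂ).range := ⟨2, by simp⟩
  have hrc : ∀ m q, rc m q ∈ (Int.castRingHom ℂ).range := fun m q =>
    ⟨_, (rc_eq_ramanujanSum m q).symm⟩
  refine add_mem (sum_mem fun i _ => sum_mem fun d _ => ?_)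
    (sum_mem fun i _ => sum_mem fun d _ => ?_) <;>
  split_ifs <;>
  apply_rules [mul_mem, pow_mem, neg_mem, one_mem, zero_mem, intCast_mem]

def deltaResidue (n : ℕ) (B : Finset ℕ) (q : ℕ) : ℤ :=
  ∑ d ∈ BpartStar n B 2, ramanujanSum (n / (4 * d)) q +
    ∑ d ∈ Bpart n B 3, ramanujanSum (n / (8 * d)) q

theorem exists_delta_eq_deltaResidue_add_two_mul (n : ℕ) (B D : Finset ℕ) (σ : ℕ → ℤ) (j : ℕ) :
    ∃ k : ℤ, Delta n B D σ j = ((deltaResidue n B (j / 2 ^ padicValNat 2 j) + 2 * k : ℤ) : ℂ) := by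
  obtain ⟨L, hL⟩ := lam3_mem_range n B D σ j
  rw [eq_intCast] at hL
  set S₃ := ∑ d ∈ Bpart n B 3, ramanujanSum (n / (8 * d)) (j / 2 ^ padicValNat 2 j)
  rcases neg_one_pow_eq_or ℂ (j / 4) with hsign | hsign
  · refine ⟨L, ?_⟩
    simp only [Delta, deltaResidue, rc_eq_ramanujanSum, hsign, ← hL, one_mul]
    push_cast
    ring
  · refine ⟨L - S₃, ?_⟩
    simp only [Delta, deltaResidue, rc_eq_ramanujanSum, hsign, ← hL, S₃, neg_one_mul,
      sum_neg_distrib]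
    push_cast
    ring

theorem exists_delta_sub_eq_two_mul_iff (n : ℕ) (B D : Finset ℕ) (σ : ℕ → ℤ) (j j' : ℕ) :
    (∃ k : ℤ, Delta n B D σ j - Delta n B D σ j' = ((2 * k : ℤ) : ℂ)) ↔
      Even (deltaResidue n B (j / 2 ^ padicValNat 2 j) -
        deltaResidue n B (j' / 2 ^ padicValNat 2 j')) := by
  obtain ⟨k₁, h₁⟩ := exists_delta_eq_deltaResidue_add_two_mul n B D σ j
  obtain ⟨k₂, h₂⟩ := exists_delta_eq_deltaResidue_add_two_mul n B D σ j'
  simp only [h₁, h₂, ← Int.cast_sub, Int.cast_inj]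
  constructor
  · rintro ⟨k, hk⟩
    exact ⟨k - k₁ + k₂, by linarith⟩
  · rintro ⟨r, hr⟩
    exact ⟨r + k₁ - k₂, by linarith⟩

theorem odd_div_two_pow_padicValNat {j : ℕ} (hj : j ≠ 0) : Odd (j / 2 ^ padicValNat 2 j) := by
  rw [← Nat.factorization_def j Nat.prime_two, ← Nat.not_even_iff_odd, even_iff_two_dvd]
  exact Nat.not_dvd_ordCompl Nat.prime_two hj

theorem four_mul_div_two_pow_padicValNat {q : ℕ} (hq : Odd q) :
    4 * q / 2 ^ padicValNat 2 (4 * q) = q := by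
  rw [← Nat.factorization_def _ Nat.prime_two, show 4 * q = 2 ^ 2 * q by norm_num,
    Nat.ordCompl_pow_mul_of_not_dvd 2 Nat.prime_two (by simpa [← even_iff_two_dvd] using hq)]

theorem dvd_and_odd_div_of_padicValNat_div {n d : ℕ} (hn : n ≠ 0) (hd : d ∣ n) :
    2 ^ padicValNat 2 (n / d) * d ∣ n ∧ Odd (n / (2 ^ padicValNat 2 (n / d) * d)) := by
  have hnd : n / d ≠ 0 := (Nat.div_ne_zero_iff_of_dvd hd).2 ⟨hn, ne_zero_of_dvd_ne_zero hn hd⟩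
  rw [← Nat.factorization_def _ Nat.prime_two, mul_comm, ← Nat.div_div_eq_div_mul,
    ← Nat.not_even_iff_odd, even_iff_two_dvd]
  exact ⟨Nat.mul_dvd_of_dvd_div hd (Nat.ordProj_dvd _ _), Nat.not_dvd_ordCompl Nat.prime_two hnd⟩

theorem div_injOn_dvd {n : ℕ} (hn : n ≠ 0) : Set.InjOn (n / ·) {a | a ∣ n} := fun a ha b hb h => by
  rw [← Nat.div_div_self ha hn, ← Nat.div_div_self hb hn]
  exact congrArg (n / ·) h

def starQuotients (n : ℕ) (B : Finset ℕ) (i : ℕ) : Finset ℕ :=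
  (BpartStar n B i).image fun d => n / (2 ^ i * d)

section

variable {n : ℕ} {B : Finset ℕ}

theorem dvd_and_odd_of_mem_Bpart {i d : ℕ} (hB : ∀ d ∈ B, d ∣ n ∧ d < n) (hd : d ∈ Bpart n B i) :
    2 ^ i * d ∣ n ∧ Odd (n / (2 ^ i * d)) := by
  obtain ⟨hdB, rfl⟩ := mem_filter.1 hd
  obtain ⟨hdn, hlt⟩ := hB d hdB
  exact dvd_and_odd_div_of_padicValNat_div (by omega) hdn

theorem div_ne_one_of_mem_BpartStar {i d : ℕ} (hB : ∀ d ∈ B, d ∣ n ∧ d < n)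
    (hd : d ∈ BpartStar n B i) : n / (2 ^ i * d) ≠ 1 := fun h => by
  have hdvd := (dvd_and_odd_of_mem_Bpart hB (mem_of_mem_erase hd)).1
  refine ne_of_mem_erase hd ?_
  rw [← Nat.eq_of_dvd_of_div_eq_one hdvd h, Nat.mul_div_cancel_left _ (by positivity)]

theorem odd_and_ne_one_of_mem_starQuotients {i m : ℕ} (hB : ∀ d ∈ B, d ∣ n ∧ d < n)
    (hm : m ∈ starQuotients n B i) : Odd m ∧ m ≠ 1 := by
  obtain ⟨d, hd, rfl⟩ := mem_image.1 hm
  exact ⟨(dvd_and_odd_of_mem_Bpart hB (mem_of_mem_erase hd)).2, div_ne_one_of_mem_BpartStar hB hd⟩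

theorem sum_BpartStar_eq_sum_starQuotients (hB : ∀ d ∈ B, d ∣ n ∧ d < n) (i : ℕ) (f : ℕ → ℤ) :
    ∑ d ∈ BpartStar n B i, f (n / (2 ^ i * d)) = ∑ m ∈ starQuotients n B i, f m := by
  refine (sum_image fun a ha b hb h => ?_).symm
  have hdvd := fun d (hd : d ∈ BpartStar n B i) =>
    (dvd_and_odd_of_mem_Bpart hB (mem_of_mem_erase hd)).1
  have hn : n ≠ 0 := by
    have := (hB a (mem_of_mem_filter a (mem_of_mem_erase ha))).2
    omega
  exact Nat.eq_of_mul_eq_mul_left (by positivity) (div_injOn_dvd hn (hdvd a ha) (hdvd b hb) h)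

theorem deltaResidue_eq (hB : ∀ d ∈ B, d ∣ n ∧ d < n) (q : ℕ) :
    deltaResidue n B q = ∑ m ∈ starQuotients n B 2, ramanujanSum m q +
      ∑ m ∈ starQuotients n B 3, ramanujanSum m q + if n / 2 ^ 3 ∈ Bpart n B 3 then 1 else 0 := by
  have h4 : ∀ d, 4 * d = 2 ^ 2 * d := fun _ => rfl
  have h8 : ∀ d, 8 * d = 2 ^ 3 * d := fun _ => rfl
  simp only [deltaResidue, h4, h8]
  rw [← sum_BpartStar_eq_sum_starQuotients hB, ← sum_BpartStar_eq_sum_starQuotients hB,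
    add_assoc, BpartStar, BpartStar]
  congr 1
  split_ifs with h
  · have hn : 0 < n := by
      have := (hB _ (mem_filter.1 h).1).2
      omega
    rw [← sum_erase_add _ _ h,
      Nat.mul_div_cancel' (dvd_of_mul_right_dvd (dvd_and_odd_of_mem_Bpart hB h).1),
      Nat.div_self hn]
    simp [ramanujanSum, filter_singleton]
  · rw [add_zero, erase_eq_of_notMem h]

theorem starQuotients_eq_iff (hB : ∀ d ∈ B, d ∣ n ∧ d < n) :
    starQuotients n B 2 = starQuotients n B 3 ↔ BpartStar n B 2 = scaleSet 2 (BpartStar n B 3) := by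
  rcases eq_or_ne n 0 with rfl | hn
  · obtain rfl : B = ∅ := eq_empty_of_forall_notMem fun d hd => by
      have := (hB d hd).2
      omega
    simp [starQuotients, BpartStar, Bpart, scaleSet]
  have hinj : Set.InjOn (fun d => n / (2 ^ 2 * d)) {d | 2 ^ 2 * d ∣ n} := fun a ha b hb h =>
    Nat.eq_of_mul_eq_mul_left (by positivity) (div_injOn_dvd hn ha hb h)
  have h₂ : ↑(BpartStar n B 2) ⊆ {d | 2 ^ 2 * d ∣ n} := fun d hd =>
    (dvd_and_odd_of_mem_Bpart hB (mem_of_mem_erase hd)).1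
  have h₃ : ↑(scaleSet 2 (BpartStar n B 3)) ⊆ {d | 2 ^ 2 * d ∣ n} := fun d hd => by
    obtain ⟨e, he, rfl⟩ := mem_image.1 hd
    simpa [← mul_assoc] using (dvd_and_odd_of_mem_Bpart hB (mem_of_mem_erase he)).1
  have hstar₃ : starQuotients n B 3 = (scaleSet 2 (BpartStar n B 3)).image
      fun d => n / (2 ^ 2 * d) := by
    rw [starQuotients, scaleSet, image_image]
    refine image_congr fun d _ => ?_
    simp only [Function.comp_apply]
    ring_nf
  rw [hstar₃, starQuotients, ← Finset.coe_inj, coe_image, coe_image, hinj.image_eq_image_iff h₂ h₃,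
    Finset.coe_inj]

theorem forall_even_sub_deltaResidue_iff (hB : ∀ d ∈ B, d ∣ n ∧ d < n) :
    (∀ q q', Odd q → Odd q' → Even (deltaResidue n B q - deltaResidue n B q')) ↔
      BpartStar n B 2 = scaleSet 2 (BpartStar n B 3) := by
  have hmem : ∀ m ∈ starQuotients n B 2 ∪ starQuotients n B 3, Odd m ∧ m ≠ 1 := fun m hm => by
    rcases mem_union.1 hm with hm | hm <;> exact odd_and_ne_one_of_mem_starQuotients hB hm
  rw [← starQuotients_eq_iff hB, ← forall_even_sub_sum_ramanujanSum_iff (fun m hm => (hmem m hm).1)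
    fun m hm => (hmem m hm).2]
  simp only [deltaResidue_eq hB, add_sub_add_right_eq_sub]

end

theorem stmt13 (n : ℕ) (B D : Finset ℕ) (σ : ℕ → ℤ) (hΓ : IsIMCG n B D σ) :
    (∀ j j' : ℕ, 0 < j → 4 ∣ j → 0 < j' → 4 ∣ j' →
        ∃ k : ℤ, Delta n B D σ j - Delta n B D σ j' = ((2 * k : ℤ) : ℂ)) ↔
      BpartStar n B 2 = scaleSet 2 (BpartStar n B 3) := by
  rw [← forall_even_sub_deltaResidue_iff fun d hd => ⟨(hΓ.1 d hd).1, (hΓ.1 d hd).2.2⟩]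
  constructor
  · intro h q q' hq hq'
    have := (exists_delta_sub_eq_two_mul_iff n B D σ (4 * q) (4 * q')).1
      (h _ _ (mul_pos four_pos hq.pos) (dvd_mul_right 4 q) (mul_pos four_pos hq'.pos)
        (dvd_mul_right 4 q'))
    rwa [four_mul_div_two_pow_padicValNat hq, four_mul_div_two_pow_padicValNat hq'] at this
  · intro h j j' hj _ hj' _
    exact (exists_delta_sub_eq_two_mul_iff n B D σ j j').2
      (h _ _ (odd_div_two_pow_padicValNat hj.ne') (odd_div_two_pow_padicValNat hj'.ne'))
end
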